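/- For the SDP of the previous context, every dual feasible Y (i.e., Y ⪰ 0 with ⟨A₁,Y⟩ = 0, ⟨A₂,Y⟩ = 1, ⟨A₃,Y⟩ = 1) has objective value ⟨B,Y⟩ = 1. Hence the SDP primal-dual pair has a positive duality gap of 1. -/

import Mathlib

/-!
`⟨A₁, Y⟩ = y₁₁ = 0` forces the first row and column of the positive semidefinite `Y` to vanish,
so `⟨A₂, Y⟩ = 1` reduces to `y₂₂ = 1` and `⟨B, Y⟩ = y₁₁ + y₂₂ = 1`. In `Fin 4` the entry `y₁₁` is
`Y 0 0`.
-/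

open Matrix
open scoped ComplexOrder

theorem Matrix.PosSemidef.apply_eq_zero_of_diag_eq_zero {𝕜 n : Type*} [RCLike 𝕜] [Fintype n]
    {A : Matrix n n 𝕜} (hA : A.PosSemidef) {i : n} (hi : A i i = 0) (j : n) :
    A j i = 0 ∧ A i j = 0 := by
  classical
  have hAi : A *ᵥ Pi.single i 1 = 0 :=
    (hA.dotProduct_mulVec_zero_iff _).mp (by simp [hi])
  have hji : A j i = 0 := by simpa using congrFun hAi j
  refine ⟨hji, ?_⟩
  rw [← hA.isHermitian.apply i j, hji, star_zero]

theorem stmt_18_general (Y : Matrix (Fin 4) (Fin 4) ℝ) (hY : Y.PosSemidef)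
    (h1 : ((!![1,0,0,0; 0,0,0,0; 0,0,0,0; 0,0,0,0] : Matrix (Fin 4) (Fin 4) ℝ) * Y).trace = 0)
    (h2 : ((!![0,0,1,0; 0,1,0,0; 1,0,0,0; 0,0,0,0] : Matrix (Fin 4) (Fin 4) ℝ) * Y).trace = 1) :
    ((!![1,0,0,0; 0,1,0,0; 0,0,0,0; 0,0,0,0] : Matrix (Fin 4) (Fin 4) ℝ) * Y).trace = 1 := by
  have hY00 : Y 0 0 = 0 := by simpa [trace, vecMul, dotProduct, Fin.sum_univ_four] using h1
  obtain ⟨hY20, hY02⟩ := hY.apply_eq_zero_of_diag_eq_zero hY00 2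
  have hY11 : Y 1 1 = 1 := by
    simpa [trace, vecMul, dotProduct, Fin.sum_univ_four, hY20, hY02] using h2
  simp [trace, vecMul, dotProduct, Fin.sum_univ_four, hY00, hY11]

/-- For the 4×4 SDP with `A₁ = E₁₁`, `A₂ = E₂₂ + E₁₃ + E₃₁`, `A₃ = E₃₃ + E₂₄ + E₄₂`,
`B = E₁₁ + E₂₂`: every dual feasible `Y` has objective value `⟨B, Y⟩ = 1` (while the primal
optimal value is `0`, giving a duality gap of `1`). -/
theorem stmt_18 (Y : Matrix (Fin 4) (Fin 4) ℝ) (hY : Y.PosSemidef)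
    (h1 : ((!![1,0,0,0; 0,0,0,0; 0,0,0,0; 0,0,0,0] : Matrix (Fin 4) (Fin 4) ℝ) * Y).trace = 0)
    (h2 : ((!![0,0,1,0; 0,1,0,0; 1,0,0,0; 0,0,0,0] : Matrix (Fin 4) (Fin 4) ℝ) * Y).trace = 1)
    (h3 : ((!![0,0,0,0; 0,0,0,1; 0,0,1,0; 0,1,0,0] : Matrix (Fin 4) (Fin 4) ℝ) * Y).trace = 1) :
    ((!![1,0,0,0; 0,1,0,0; 0,0,0,0; 0,0,0,0] : Matrix (Fin 4) (Fin 4) ℝ) * Y).trace = 1 :=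
  stmt_18_general Y hY h1 h2
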